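/- arXiv:2309.08338 — 3 statements merged into one kernel-verified Lean document; each statement's English description precedes it below -/
import Mathlib

section
/- Peeling bound via dominoes: there exists r₀ > 0 (explicitly r₀ = 1/|B(0,5L) ∩ ℤ^d|) such that for any contour γ, the set of dominoes D(γ) = {(i,j) ∈ γ̄² : ‖i-j‖_∞ = 1, #_i = 1, #_j = 0} satisfies |D(γ)| ≥ r₀ |γ̄|. -/
open Set

noncomputable section

/-- A site of the lattice `ℤ^d`. -/
abbrev Site (d : ℕ) := Fin d → ℤ

/-- Euclidean distance between lattice sites. -/
def eDist {d : ℕ} (i j : Site d) : ℝ :=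
  Real.sqrt (∑ k, ((i k - j k : ℤ) : ℝ) ^ 2)

/-- Sup-norm adjacency: `‖i - j‖_∞ = 1`. -/
def chebAdj {d : ℕ} (i j : Site d) : Prop :=
  i ≠ j ∧ ∀ k, |i k - j k| ≤ 1

/-- A site `i` is `s`-correct when all sites within Euclidean distance `L` carry spin `s`. -/
def correct {d : ℕ} (σ : Site d → Bool) (L : ℝ) (i : Site d) (s : Bool) : Prop :=
  ∀ j, eDist i j ≤ L → σ j = s

/-- A site is non-correct if it is neither `0`-correct nor `1`-correct. -/
def noncorrect {d : ℕ} (σ : Site d → Bool) (L : ℝ) (i : Site d) : Prop :=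
  ¬ correct σ L i true ∧ ¬ correct σ L i false

/-- `γ̄` is (the support of) a contour: a nonempty finite maximal connected component of
the set of non-correct sites (for `‖·‖_∞`-adjacency). -/
def IsContour {d : ℕ} (σ : Site d → Bool) (L : ℝ) (γ : Finset (Site d)) : Prop :=
  γ.Nonempty ∧ (∀ i ∈ γ, noncorrect σ L i) ∧
    (∀ i ∈ γ, ∀ j, noncorrect σ L j → chebAdj i j → j ∈ γ) ∧
    ∀ i ∈ γ, ∀ j ∈ γ,
      Relation.ReflTransGen (fun a b => a ∈ γ ∧ b ∈ γ ∧ chebAdj a b) i j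

/-- Cardinality of the lattice ball `B(0, r) ∩ ℤ^d` (Euclidean radius `r`). -/
def latticeBallCard (d : ℕ) (r : ℝ) : ℕ :=
  Nat.card {j : Site d | eDist j 0 ≤ r}

/-! ### Auxiliary lemmas -/

lemma eDist_self' {d : ℕ} (i : Site d) : eDist i i = 0 := by
  simp [eDist]

lemma eDist_comm' {d : ℕ} (i j : Site d) : eDist i j = eDist j i := by
  unfold eDist
  congr 1
  apply Finset.sum_congr rfl
  intro k _
  push_cast
  ring

lemma one_le_eDist' {d : ℕ} {i j : Site d} (h : i ≠ j) : 1 ≤ eDist i j := by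
  obtain ⟨k, hk⟩ := Function.ne_iff.mp h
  have h0 : (1 : ℤ) ≤ (i k - j k) ^ 2 := by
    rcases lt_trichotomy (i k) (j k) with h | h | h
    · nlinarith
    · exact absurd h hk
    · nlinarith
  have h1 : (1 : ℝ) ≤ ((i k - j k : ℤ) : ℝ) ^ 2 := by exact_mod_cast h0
  calc (1 : ℝ) = Real.sqrt 1 := by simp
    _ ≤ eDist i j := by
        apply Real.sqrt_le_sqrt
        calc (1:ℝ) ≤ ((i k - j k : ℤ) : ℝ) ^ 2 := h1
          _ ≤ ∑ k, ((i k - j k : ℤ) : ℝ) ^ 2 :=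
              Finset.single_le_sum (f := fun m => ((i m - j m : ℤ) : ℝ) ^ 2)
                (fun m _ => sq_nonneg _) (Finset.mem_univ k)

lemma eDist_le_eDist' {d : ℕ} {i j a b : Site d}
    (h : ∀ k, ((i k - j k : ℤ) : ℝ) ^ 2 ≤ ((a k - b k : ℤ) : ℝ) ^ 2) :
    eDist i j ≤ eDist a b := by
  apply Real.sqrt_le_sqrt
  exact Finset.sum_le_sum (fun k _ => h k)

lemma abs_coord_le_of_eDist_le' {d : ℕ} {i c : Site d} {r : ℝ} (h : eDist i c ≤ r) (k : Fin d) :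
    |((i k - c k : ℤ) : ℝ)| ≤ r := by
  have h1 : |((i k - c k : ℤ) : ℝ)| = Real.sqrt (((i k - c k : ℤ) : ℝ) ^ 2) := by
    rw [Real.sqrt_sq_eq_abs]
  rw [h1]
  refine le_trans ?_ h
  apply Real.sqrt_le_sqrt
  exact Finset.single_le_sum (f := fun m => ((i m - c m : ℤ) : ℝ) ^ 2)
    (fun m _ => sq_nonneg _) (Finset.mem_univ k)

lemma ball_finite' {d : ℕ} (c : Site d) (r : ℝ) : {j : Site d | eDist j c ≤ r}.Finite := by
  apply Set.Finite.subset (Set.Finite.pi (fun k : Fin d => Set.finite_Icc (c k - ⌊r⌋) (c k + ⌊r⌋)))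
  intro j hj
  simp only [Set.mem_setOf_eq] at hj
  intro k _
  have h := abs_coord_le_of_eDist_le' hj k
  have h2 : |j k - c k| ≤ ⌊r⌋ := by
    rw [Int.le_floor]
    calc ((|j k - c k| : ℤ) : ℝ) = |((j k - c k : ℤ) : ℝ)| := by push_cast; ring
      _ ≤ r := h
  have := abs_le.mp h2
  constructor <;> omega

lemma card_ball_eq' {d : ℕ} (a : Site d) (r : ℝ) :
    Nat.card {j : Site d | eDist j a ≤ r} = latticeBallCard d r := by
  apply Nat.card_congr
  refine Equiv.subtypeEquiv (Equiv.subRight a) ?_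
  intro j
  simp only [Set.mem_setOf_eq, Equiv.subRight_apply]
  have : eDist (j - a) 0 = eDist j a := by
    unfold eDist
    congr 1
    apply Finset.sum_congr rfl
    intro k _
    simp [Pi.sub_apply]
  rw [this]

lemma card_ball_mono' {d : ℕ} {r s : ℝ} (h : r ≤ s) :
    latticeBallCard d r ≤ latticeBallCard d s := by
  unfold latticeBallCard
  rw [Nat.card_coe_set_eq, Nat.card_coe_set_eq]
  apply Set.ncard_le_ncard
  · intro j hj; exact le_trans hj h
  · exact ball_finite' 0 s

lemma card_ball_pos' {d : ℕ} {r : ℝ} (h : 0 ≤ r) : 0 < latticeBallCard d r := by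
  unfold latticeBallCard
  have hne : (0 : Site d) ∈ {j : Site d | eDist j 0 ≤ r} := by
    simp only [Set.mem_setOf_eq]
    rw [eDist_self']; exact h
  have : Nonempty {j : Site d | eDist j 0 ≤ r} := ⟨⟨0, hne⟩⟩
  have : Finite {j : Site d | eDist j 0 ≤ r} := (ball_finite' 0 r).to_subtype
  exact Nat.card_pos

lemma chebAdj_symm {d : ℕ} {i j : Site d} (h : chebAdj i j) : chebAdj j i :=
  ⟨h.1.symm, fun k => by rw [abs_sub_comm]; exact h.2 k⟩

lemma noncorrect_of' {d : ℕ} {σ : Site d → Bool} {L : ℝ} (hL : 0 ≤ L)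
    {x y : Site d} {s : Bool} (hx : σ x = s) (hy : eDist x y ≤ L) (hys : σ y = !s) :
    noncorrect σ L x := by
  constructor <;> intro hc
  · have h1 := hc x (by rw [eDist_self']; exact hL)
    have h2 := hc y hy
    rw [hx] at h1; rw [hys] at h2; cases s <;> simp_all
  · have h1 := hc x (by rw [eDist_self']; exact hL)
    have h2 := hc y hy
    rw [hx] at h1; rw [hys] at h2; cases s <;> simp_all

lemma one_le_L_of_contour {d : ℕ} {σ : Site d → Bool} {L : ℝ} (hL : 0 < L)
    {γ : Finset (Site d)} (hγ : IsContour σ L γ) : 1 ≤ L := by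
  by_contra h
  push_neg at h
  obtain ⟨i, hi⟩ := hγ.1
  have hnc := hγ.2.1 i hi
  have hcor : correct σ L i (σ i) := by
    intro j hj
    by_cases hji : j = i
    · rw [hji]
    · exfalso
      have := one_le_eDist' (fun hh => hji hh.symm)
      linarith
  cases h2 : σ i
  · rw [h2] at hcor; exact hnc.2 hcor
  · rw [h2] at hcor; exact hnc.1 hcor

/-- Taxicab distance. -/
def tax {d : ℕ} (i j : Site d) : ℕ := ∑ k, (i k - j k).natAbs

/-- Betweenness of coordinates. -/
def BtwZ {d : ℕ} (i j0 p : Site d) : Prop :=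
  ∀ k, (i k ≤ p k ∧ p k ≤ j0 k) ∨ (j0 k ≤ p k ∧ p k ≤ i k)

lemma eDist_le_of_btw_left {d : ℕ} {i j0 p : Site d} (h : BtwZ i j0 p) :
    eDist i p ≤ eDist i j0 := by
  apply eDist_le_eDist'
  intro k
  have hq : (i k - p k) ^ 2 ≤ (i k - j0 k) ^ 2 := by
    rcases h k with ⟨h1, h2⟩ | ⟨h1, h2⟩ <;> nlinarith
  exact_mod_cast hq

lemma eDist_le_of_btw_right {d : ℕ} {i j0 p : Site d} (h : BtwZ i j0 p) :
    eDist p j0 ≤ eDist i j0 := by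
  apply eDist_le_eDist'
  intro k
  have hq : (p k - j0 k) ^ 2 ≤ (i k - j0 k) ^ 2 := by
    rcases h k with ⟨h1, h2⟩ | ⟨h1, h2⟩ <;> nlinarith
  exact_mod_cast hq

lemma key_ind {d : ℕ} {σ : Site d → Bool} {L : ℝ} {γ : Finset (Site d)}
    (hγ : IsContour σ L γ) (hL1 : 1 ≤ L)
    (i j0 : Site d) (s : Bool) (hj0 : σ j0 = !s) (hd0 : eDist i j0 ≤ L) :
    ∀ n : ℕ, ∀ p : Site d, tax p j0 = n → BtwZ i j0 p → p ∈ γ → σ p = s →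
      ∃ a b, a ∈ γ ∧ b ∈ γ ∧ chebAdj a b ∧ σ a = true ∧ σ b = false ∧ eDist i a ≤ L := by
  have hL0 : (0:ℝ) ≤ L := le_trans zero_le_one hL1
  intro n
  induction n with
  | zero =>
    intro p htax hbtw hp hps
    exfalso
    have hpj : p = j0 := by
      funext k
      have hz : (p k - j0 k).natAbs = 0 := by
        have := (Finset.sum_eq_zero_iff.mp htax) k (Finset.mem_univ k)
        exact this
      omega
    rw [hpj, hj0] at hps
    cases s <;> simp_all
  | succ n ih =>
    intro p htax hbtw hp hps
    -- there is a coordinate where p differs from j0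
    have hpne : p ≠ j0 := by
      intro h
      rw [h] at htax
      simp [tax] at htax
    obtain ⟨k0, hk0⟩ := Function.ne_iff.mp hpne
    set δ : ℤ := if p k0 < j0 k0 then 1 else -1 with hδdef
    set p' : Site d := Function.update p k0 (p k0 + δ) with hp'def
    have hp'k0 : p' k0 = p k0 + δ := Function.update_self k0 _ p
    have hp'k : ∀ k, k ≠ k0 → p' k = p k := fun k hk => Function.update_of_ne hk _ p
    have hδcase : δ = 1 ∧ p k0 < j0 k0 ∨ δ = -1 ∧ j0 k0 < p k0 := by
      rcases lt_trichotomy (p k0) (j0 k0) with h | h | h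
      · left; exact ⟨if_pos h, h⟩
      · exact absurd h hk0
      · right; exact ⟨if_neg (by omega), h⟩
    -- adjacency
    have hppne : p ≠ p' := by
      intro h
      have := congrFun h k0
      rw [hp'k0] at this
      rcases hδcase with ⟨h1, _⟩ | ⟨h1, _⟩ <;> omega
    have hadj : chebAdj p p' := by
      refine ⟨hppne, fun k => ?_⟩
      by_cases hk : k = k0
      · subst hk
        rw [hp'k0]
        rcases hδcase with ⟨h1, _⟩ | ⟨h1, _⟩ <;> simp [h1]
      · rw [hp'k k hk]; simp
    -- eDist p p' = 1
    have heq1 : eDist p p' = 1 := by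
      unfold eDist
      have hsum : ∑ k, ((p k - p' k : ℤ) : ℝ) ^ 2
          = ∑ k, (if k = k0 then (1:ℝ) else 0) := by
        apply Finset.sum_congr rfl
        intro k _
        by_cases hk : k = k0
        · subst hk
          rw [hp'k0]
          rcases hδcase with ⟨h1, _⟩ | ⟨h1, _⟩ <;> rw [h1] <;> norm_num
        · rw [hp'k k hk]
          simp [hk]
      rw [hsum, Finset.sum_ite_eq' Finset.univ k0 (fun _ => (1:ℝ))]
      simp
    -- betweenness of p'
    have hbtw' : BtwZ i j0 p' := by
      intro k
      by_cases hk : k = k0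
      · subst hk
        rw [hp'k0]
        rcases hbtw k with ⟨h1, h2⟩ | ⟨h1, h2⟩ <;>
          rcases hδcase with ⟨hd1, hd2⟩ | ⟨hd1, hd2⟩ <;> [left; left; right; right] <;> omega
      · rw [hp'k k hk]; exact hbtw k
    -- taxicab decreases
    have htax' : tax p' j0 = n := by
      have hdec : (p' k0 - j0 k0).natAbs + 1 = (p k0 - j0 k0).natAbs := by
        rw [hp'k0]
        rcases hδcase with ⟨h1, h2⟩ | ⟨h1, h2⟩ <;> rw [h1] <;> omega
      have hsplit1 : tax p j0 = (p k0 - j0 k0).natAbs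
          + ∑ k ∈ Finset.univ.erase k0, (p k - j0 k).natAbs :=
        (Finset.add_sum_erase _ _ (Finset.mem_univ k0)).symm
      have hsplit2 : tax p' j0 = (p' k0 - j0 k0).natAbs
          + ∑ k ∈ Finset.univ.erase k0, (p' k - j0 k).natAbs :=
        (Finset.add_sum_erase _ _ (Finset.mem_univ k0)).symm
      have hrest : ∑ k ∈ Finset.univ.erase k0, (p' k - j0 k).natAbs
          = ∑ k ∈ Finset.univ.erase k0, (p k - j0 k).natAbs := by
        apply Finset.sum_congr rfl
        intro k hk
        rw [hp'k k (Finset.ne_of_mem_erase hk)]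
      rw [hsplit1] at htax
      rw [hsplit2, hrest]
      omega
    -- distances
    have hdi'  : eDist i p' ≤ L := le_trans (eDist_le_of_btw_left hbtw') hd0
    have hdj'  : eDist p' j0 ≤ L := le_trans (eDist_le_of_btw_right hbtw') hd0
    have hdi   : eDist i p ≤ L := le_trans (eDist_le_of_btw_left hbtw) hd0
    by_cases hcase : σ p' = s
    · -- continue walking
      have hnc' : noncorrect σ L p' := noncorrect_of' hL0 hcase hdj' hj0
      have hp'γ : p' ∈ γ := hγ.2.2.1 p hp p' hnc' hadj
      exact ih p' htax' hbtw' hp'γ hcase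
    · -- found the flip
      have hps' : σ p' = !s := by cases s <;> cases h' : σ p' <;> simp_all
      have hnc' : noncorrect σ L p' := by
        apply noncorrect_of' hL0 hps' (y := p)
        · rw [eDist_comm', heq1]; exact hL1
        · rw [Bool.not_not]; exact hps
      have hp'γ : p' ∈ γ := hγ.2.2.1 p hp p' hnc' hadj
      cases s with
      | true  => exact ⟨p, p', hp, hp'γ, hadj, hps, by simpa using hps', hdi⟩
      | false => exact ⟨p', p, hp'γ, hp, chebAdj_symm hadj, by simpa using hps', hps, hdi'⟩

lemma exists_domino {d : ℕ} {σ : Site d → Bool} {L : ℝ} (hL : 0 < L)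
    {γ : Finset (Site d)} (hγ : IsContour σ L γ) {i : Site d} (hi : i ∈ γ) :
    ∃ q : Site d × Site d, (q.1 ∈ γ ∧ q.2 ∈ γ ∧ chebAdj q.1 q.2 ∧
      σ q.1 = true ∧ σ q.2 = false) ∧ eDist i q.1 ≤ L := by
  have hL1 := one_le_L_of_contour hL hγ
  have hnc := hγ.2.1 i hi
  obtain ⟨s, hs⟩ : ∃ s, σ i = s := ⟨σ i, rfl⟩
  have hncs : ¬ correct σ L i s := by
    cases s
    · exact hnc.2
    · exact hnc.1
  unfold correct at hncs
  push_neg at hncs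
  obtain ⟨j0, hj0d, hj0s⟩ := hncs
  have hj0 : σ j0 = !s := by cases s <;> cases h' : σ j0 <;> simp_all
  have hbtw : BtwZ i j0 i := by
    intro k
    rcases le_total (i k) (j0 k) with h | h
    · left; exact ⟨le_refl _, h⟩
    · right; exact ⟨h, le_refl _⟩
  obtain ⟨a, b, ha, hb, hab, has, hbs, hda⟩ :=
    key_ind hγ hL1 i j0 s hj0 hj0d (tax i j0) i rfl hbtw hi hs
  exact ⟨(a, b), ⟨ha, hb, hab, has, hbs⟩, hda⟩

/-- Peeling bound via dominoes: with `r₀ = 1/|B(0,5L) ∩ ℤ^d|`, the set of dominoes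
`D(γ) = {(i,j) ∈ γ̄² : ‖i-j‖_∞ = 1, σ i = 1, σ j = 0}` of any contour `γ` satisfies
`|D(γ)| ≥ r₀ |γ̄|`. -/
theorem domino_peeling_bound
    (d : ℕ) (L : ℝ) (hL : 0 < L) (σ : Site d → Bool) (γ : Finset (Site d))
    (hγ : IsContour σ L γ) :
    (1 / (latticeBallCard d (5 * L) : ℝ)) * γ.card ≤
      (Nat.card {p : Site d × Site d |
        p.1 ∈ γ ∧ p.2 ∈ γ ∧ chebAdj p.1 p.2 ∧ σ p.1 = true ∧ σ p.2 = false} : ℝ) := by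
  set Dset := {p : Site d × Site d |
      p.1 ∈ γ ∧ p.2 ∈ γ ∧ chebAdj p.1 p.2 ∧ σ p.1 = true ∧ σ p.2 = false} with hDdef
  have hDfin : Dset.Finite := by
    apply Set.Finite.subset ((γ.finite_toSet).prod (γ.finite_toSet))
    intro p hp
    exact ⟨hp.1, hp.2.1⟩
  set Dfin := hDfin.toFinset with hDfindef
  -- choice of domino for each site
  have hex : ∀ i ∈ γ, ∃ q : Site d × Site d, q ∈ Dset ∧ eDist i q.1 ≤ L := by
    intro i hi
    obtain ⟨q, hq, hqd⟩ := exists_domino hL hγ hi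
    exact ⟨q, hq, hqd⟩
  classical
  set f : Site d → Site d × Site d := fun i =>
    if h : i ∈ γ then (hex i h).choose else (i, i) with hfdef
  have hf : ∀ i ∈ γ, f i ∈ Dfin ∧ eDist i (f i).1 ≤ L := by
    intro i hi
    have := (hex i hi).choose_spec
    rw [hfdef]
    simp only [dif_pos hi]
    exact ⟨hDfin.mem_toFinset.mpr this.1, this.2⟩
  set N := latticeBallCard d (5 * L) with hNdef
  have hNpos : 0 < N := card_ball_pos' (by linarith)
  -- fiberwise counting
  have hcount : γ.card = ∑ q ∈ Dfin, (γ.filter fun i => f i = q).card :=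
    Finset.card_eq_sum_card_fiberwise (fun i hi => (hf i hi).1)
  have hfiber : ∀ q ∈ Dfin, (γ.filter fun i => f i = q).card ≤ N := by
    intro q _
    have hsub : ↑(γ.filter fun i => f i = q) ⊆ {j : Site d | eDist j q.1 ≤ L} := by
      intro i hi
      simp only [Finset.coe_filter, Set.mem_setOf_eq] at hi
      obtain ⟨hiγ, hfi⟩ := hi
      have := (hf i hiγ).2
      rw [hfi] at this
      exact this
    calc (γ.filter fun i => f i = q).card
        = (↑(γ.filter fun i => f i = q) : Set (Site d)).ncard := (Set.ncard_coe_finset _).symm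
      _ ≤ {j : Site d | eDist j q.1 ≤ L}.ncard := Set.ncard_le_ncard hsub (ball_finite' _ _)
      _ = latticeBallCard d L := by
          rw [← Nat.card_coe_set_eq, card_ball_eq']
      _ ≤ N := card_ball_mono' (by linarith)
  have hmain : γ.card ≤ Dfin.card * N := by
    rw [hcount]
    calc ∑ q ∈ Dfin, (γ.filter fun i => f i = q).card ≤ ∑ _q ∈ Dfin, N :=
          Finset.sum_le_sum hfiber
      _ = Dfin.card * N := by rw [Finset.sum_const, smul_eq_mul]
  have hDcard : Nat.card Dset = Dfin.card := by
    rw [Nat.card_coe_set_eq, Set.ncard_eq_toFinset_card Dset hDfin]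
  rw [hDcard]
  rw [one_div, inv_mul_le_iff₀ (by exact_mod_cast hNpos)]
  calc (γ.card : ℝ) ≤ (Dfin.card * N : ℕ) := by exact_mod_cast hmain
    _ = (N : ℝ) * Dfin.card := by push_cast; ring

end
end

section
/- Bound on I_γ: under the Peierls estimate H_{γ̄}(ω) ≥ |γ̄₁|δ^d + ρ₀|γ̄| for all configurations achieving γ, the contour integral I_γ = ∫ e^{-βH_{γ̄}(ω)} 1{∀i∈γ̄, σ(ω,i)=σ_i} Π^z_{γ̂}(dω) satisfies I_γ ≤ g₀^{|γ̄₀|} g₁^{|γ̄₁|} e^{-βρ₀|γ̄|}, where g₀ = e^{-zδ^d} and g₁ = e^{-βδ^d}(1 - e^{-zδ^d}). -/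
/-!
On the event that the spin pattern is realized, the Peierls estimate bounds the Boltzmann weight
`e^{-βH}` by the constant `e^{-β(|γ̄₁|δ^d + ρ₀|γ̄|)}`, so `I_γ` is at most that constant times the
probability of the pattern, `g₀^{|γ̄₀|}(1 - e^{-zδ^d})^{|γ̄₁|}`; the factor `e^{-β|γ̄₁|δ^d}` is then
distributed over the occupied tiles.
-/

open MeasureTheory Real

theorem setIntegral_exp_neg_mul_le_of_le {Ω : Type*} [MeasurableSpace Ω] {μ : Measure Ω}
    {s : Set Ω} {H : Ω → ℝ} {β E : ℝ} (hβ : 0 ≤ β) (hs : μ s < ⊤) (hH : ∀ ω ∈ s, E ≤ H ω) :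
    ∫ ω in s, exp (-β * H ω) ∂μ ≤ exp (-β * E) * μ.real s := by
  refine (Real.le_norm_self _).trans (norm_setIntegral_le_of_norm_le_const hs fun ω hω => ?_)
  rw [norm_of_nonneg (exp_pos _).le, exp_le_exp]
  nlinarith [hH ω hω]

theorem exp_neg_mul_natCast_mul_add (β a b : ℝ) (m n : ℕ) :
    exp (-β * (m * a + b * n)) = exp (-β * a) ^ m * exp (-β * b * n) := by
  rw [← exp_nat_mul, ← exp_add]
  ring_nf

theorem contour_integral_bound_general
    {Ω : Type*} [MeasurableSpace Ω] (P : Measure Ω)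
    (Hγ : Ω → ℝ) (pattern : Set Ω)
    (d : ℕ) (z β δ ρ₀ : ℝ) (hz : 0 < z) (hβ : 0 ≤ β) (hδ : 0 < δ)
    (n₀ n₁ : ℕ)
    (hPeierls : ∀ ω ∈ pattern, Hγ ω ≥ (n₁ : ℝ) * δ ^ d + ρ₀ * (n₀ + n₁ : ℕ))
    (hP : P pattern =
      ENNReal.ofReal ((exp (-z * δ ^ d)) ^ n₀ * (1 - exp (-z * δ ^ d)) ^ n₁)) :
    ∫ ω in pattern, exp (-β * Hγ ω) ∂P ≤
      (exp (-z * δ ^ d)) ^ n₀ * (exp (-β * δ ^ d) * (1 - exp (-z * δ ^ d))) ^ n₁ *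
        exp (-β * ρ₀ * (n₀ + n₁ : ℕ)) := by
  have hoccupied_nonneg : 0 ≤ 1 - exp (-z * δ ^ d) :=
    sub_nonneg.2 <| exp_le_one_iff.2 <| by nlinarith [pow_pos hδ d]
  have hmass : P.real pattern = exp (-z * δ ^ d) ^ n₀ * (1 - exp (-z * δ ^ d)) ^ n₁ := by
    rw [measureReal_def, hP, ENNReal.toReal_ofReal (by positivity)]
  calc ∫ ω in pattern, exp (-β * Hγ ω) ∂P
      ≤ exp (-β * ((n₁ : ℝ) * δ ^ d + ρ₀ * (n₀ + n₁ : ℕ))) * P.real pattern :=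
        setIntegral_exp_neg_mul_le_of_le hβ (hP ▸ ENNReal.ofReal_lt_top) hPeierls
    _ = _ := by
        rw [hmass, exp_neg_mul_natCast_mul_add, mul_pow]
        ring

/-- Bound on the contour integral `I_γ`: if the Peierls estimate
`H_{γ̄}(ω) ≥ |γ̄₁| δ^d + ρ₀ |γ̄|` holds for all configurations achieving the contour
(i.e. realizing the prescribed spin pattern, which under `Π^z` has probability
`(e^{-zδ^d})^{|γ̄₀|} (1-e^{-zδ^d})^{|γ̄₁|}`), then
`I_γ = ∫ 1_{pattern} e^{-β H_{γ̄}} dΠ^z ≤ g₀^{|γ̄₀|} g₁^{|γ̄₁|} e^{-βρ₀|γ̄|}`,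
where `g₀ = e^{-zδ^d}` and `g₁ = e^{-βδ^d}(1-e^{-zδ^d})`. -/
theorem contour_integral_bound
    {Ω : Type*} [MeasurableSpace Ω] (P : Measure Ω)
    (Hγ : Ω → ℝ) (pattern : Set Ω) (hmeas : MeasurableSet pattern)
    (d : ℕ) (z β δ ρ₀ : ℝ) (hz : 0 < z) (hβ : 0 ≤ β) (hδ : 0 < δ) (hρ₀ : 0 < ρ₀)
    (n₀ n₁ : ℕ)
    (hPeierls : ∀ ω ∈ pattern, Hγ ω ≥ (n₁ : ℝ) * δ ^ d + ρ₀ * (n₀ + n₁ : ℕ))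
    (hP : P pattern =
      ENNReal.ofReal ((exp (-z * δ ^ d)) ^ n₀ * (1 - exp (-z * δ ^ d)) ^ n₁)) :
    ∫ ω in pattern, exp (-β * Hγ ω) ∂P ≤
      (exp (-z * δ ^ d)) ^ n₀ * (exp (-β * δ ^ d) * (1 - exp (-z * δ ^ d))) ^ n₁ *
        exp (-β * ρ₀ * (n₀ + n₁ : ℕ)) :=
  contour_integral_bound_general P Hγ pattern d z β δ ρ₀ hz hβ hδ n₀ n₁ hPeierls hP
end

section
/- Uniqueness of the crossing activity: let G(s) = (s-1) + (βδ^d)^{-1}ln(1 - e^{-sβδ^d}) + f^{(1)}(s) - f^{(0)}(s) on the interval U_β = (ln(1+e^{βδ^d - a})/(βδ^d), ln(1+e^{βδ^d + a})/(βδ^d)). If |f^{(1)} - f^{(0)}| ≤ 2η and |∂_s f^{(#)}| ≤ Dη on U_β with 2η < a/δ^d and 2Dη < 1, then G is strictly increasing on U_β, G < 0 at the left endpoint and G > 0 at the right endpoint, so there is a unique s_β^c ∈ U_β with G(s_β^c) = 0. -/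
open Real Set

noncomputable section

/-- Uniqueness of the crossing activity. Let
`G(s) = (s-1) + (βδ^d)⁻¹ ln(1 - e^{-sβδ^d}) + f¹(s) - f⁰(s)` on
`U_β = (s⁻, s⁺)` with `s^∓ = ln(1+e^{βδ^d ∓ a})/(βδ^d)`. If `|f¹ - f⁰| ≤ 2η` and
`|∂_s f^#| ≤ Dη` on `U_β`, with `2η < a/δ^d` and `2Dη < 1`, and the endpoint identities
`G(s⁻) = -a/δ^d + f¹(s⁻) - f⁰(s⁻)`, `G(s⁺) = a/δ^d + f¹(s⁺) - f⁰(s⁺)` and the lower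
bound `1` on the derivative of the bare part hold, then `G` is strictly increasing on
`U_β`, negative at the left endpoint and positive at the right endpoint, and there is a
unique `s ∈ U_β` with `G(s) = 0`. -/
theorem unique_crossing_activity
    (d : ℕ) (a β δ D η : ℝ) (ha : 0 < a) (hβ : 0 < β) (hδ : 0 < δ) (hD : 0 < D)
    (hη : 0 < η)
    (f0 f1 f0' f1' : ℝ → ℝ) (G : ℝ → ℝ)
    (sm sp : ℝ)
    (hsm : sm = log (1 + exp (β * δ ^ d - a)) / (β * δ ^ d))
    (hsp : sp = log (1 + exp (β * δ ^ d + a)) / (β * δ ^ d))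
    (hG : ∀ s, G s = (s - 1) + (β * δ ^ d)⁻¹ * log (1 - exp (-s * β * δ ^ d))
        + f1 s - f0 s)
    (hdiff : ∀ s ∈ Icc sm sp, HasDerivAt f0 (f0' s) s ∧ HasDerivAt f1 (f1' s) s)
    (hfd : ∀ s ∈ Icc sm sp, |f0' s| ≤ D * η ∧ |f1' s| ≤ D * η)
    (hf : ∀ s ∈ Icc sm sp, |f1 s - f0 s| ≤ 2 * η)
    (hηa : 2 * η < a / δ ^ d) (hDη : 2 * D * η < 1)
    (hGm : G sm = -(a / δ ^ d) + (f1 sm - f0 sm))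
    (hGp : G sp = a / δ ^ d + (f1 sp - f0 sp))
    (hbare : ∀ s ∈ Icc sm sp,
      HasDerivAt (fun s => (s - 1) + (β * δ ^ d)⁻¹ * log (1 - exp (-s * β * δ ^ d)))
        (1 / (exp (s * β * δ ^ d) - 1) + 1) s) :
    StrictMonoOn G (Icc sm sp) ∧ G sm < 0 ∧ 0 < G sp ∧
      ∃! s : ℝ, s ∈ Ioo sm sp ∧ G s = 0 := by
  have hbd : 0 < β * δ ^ d := by positivity
  have hsmsp : sm < sp := by
    rw [hsm, hsp]
    apply div_lt_div_of_pos_right _ hbd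
    apply Real.log_lt_log (by positivity)
    have : β * δ ^ d - a < β * δ ^ d + a := by linarith
    linarith [Real.exp_lt_exp.mpr this]
  have hsm0 : 0 < sm := by
    rw [hsm]
    apply div_pos _ hbd
    apply Real.log_pos
    linarith [Real.exp_pos (β * δ ^ d - a)]
  -- derivative of G
  have hGfun : G = fun s => ((s - 1) + (β * δ ^ d)⁻¹ * log (1 - exp (-s * β * δ ^ d))
      + f1 s - f0 s) := funext hG
  have hGd : ∀ s ∈ Icc sm sp,
      HasDerivAt G (1 / (exp (s * β * δ ^ d) - 1) + 1 + f1' s - f0' s) s := by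
    intro s hs
    rw [hGfun]
    exact (((hbare s hs).add (hdiff s hs).2).sub (hdiff s hs).1)
  have hGdpos : ∀ s ∈ Icc sm sp, 0 < 1 / (exp (s * β * δ ^ d) - 1) + 1 + f1' s - f0' s := by
    intro s hs
    have hs0 : 0 < s := lt_of_lt_of_le hsm0 hs.1
    have h1 : (1:ℝ) < exp (s * β * δ ^ d) := by
      rw [← Real.exp_zero]
      exact Real.exp_lt_exp.mpr (by positivity)
    have h2 : 0 < 1 / (exp (s * β * δ ^ d) - 1) := by
      apply div_pos one_pos; linarith
    obtain ⟨h0, h1'⟩ := hfd s hs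
    have := abs_le.mp h0
    have := abs_le.mp h1'
    nlinarith
  have hcont : ContinuousOn G (Icc sm sp) := fun s hs =>
    (hGd s hs).continuousAt.continuousWithinAt
  have hmono : StrictMonoOn G (Icc sm sp) := by
    apply strictMonoOn_of_deriv_pos (convex_Icc sm sp) hcont
    intro s hs
    rw [interior_Icc] at hs
    have hs' : s ∈ Icc sm sp := Ioo_subset_Icc_self hs
    rw [(hGd s hs').deriv]
    exact hGdpos s hs'
  have hmem_m : sm ∈ Icc sm sp := ⟨le_refl _, le_of_lt hsmsp⟩
  have hmem_p : sp ∈ Icc sm sp := ⟨le_of_lt hsmsp, le_refl _⟩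
  have hGm0 : G sm < 0 := by
    have := abs_le.mp (hf sm hmem_m)
    rw [hGm]; linarith
  have hGp0 : 0 < G sp := by
    have := abs_le.mp (hf sp hmem_p)
    rw [hGp]; linarith
  refine ⟨hmono, hGm0, hGp0, ?_⟩
  have h0mem : (0:ℝ) ∈ Ioo (G sm) (G sp) := ⟨hGm0, hGp0⟩
  obtain ⟨s, hsIoo, hs0⟩ := intermediate_value_Ioo (le_of_lt hsmsp) hcont h0mem
  refine ⟨s, ⟨hsIoo, hs0⟩, ?_⟩
  rintro y ⟨hyIoo, hy0⟩
  have hsIcc : s ∈ Icc sm sp := Ioo_subset_Icc_self hsIoo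
  have hyIcc : y ∈ Icc sm sp := Ioo_subset_Icc_self hyIoo
  rcases lt_trichotomy y s with h | h | h
  · have := hmono hyIcc hsIcc h; rw [hy0, hs0] at this; exact absurd this (lt_irrefl 0)
  · exact h
  · have := hmono hsIcc hyIcc h; rw [hy0, hs0] at this; exact absurd this (lt_irrefl 0)

end
end
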